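/- For |q|<1, one has ∑_{n≥0} (1/q;q²)_n (−1)^n q^n/(−q²;q²)_n = 2/(1+q). -/

import Mathlib

/-!
Writing `t_n` for the `n`-th term, one has `t_{n+1} (1 + q^{2n+2}) = -(q - q^{2n}) t_n`, hence
`(1 + q) t_n = F_n - F_{n+1}` with `F_n = t_n (1 + q^{2n})`. The series therefore telescopes to
`(F_0 - lim F_n) / (1 + q) = 2 / (1 + q)`: the ratios `t_{n+1} / t_n` tend to `-q`, so the series
converges absolutely, and then `t_n → 0` forces `F_n → 0`.
-/

open scoped BigOperators

/-- The finite q-Pochhammer symbol `(a;q)_n = ∏_{j=0}^{n-1} (1 - a q^j)`. -/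
noncomputable def qPoch (a q : ℂ) (n : ℕ) : ℂ := ∏ j ∈ Finset.range n, (1 - a * q ^ j)

open Filter Topology

lemma one_add_ne_zero_of_norm_lt_one {R : Type*} [SeminormedRing R] [NormOneClass R] {z : R}
    (hz : ‖z‖ < 1) : 1 + z ≠ 0 := by
  intro h
  rw [← neg_eq_of_add_eq_zero_right h, norm_neg, norm_one] at hz
  exact hz.false

/-- A ratio test: the ratios `g n` need not be quotients of consecutive terms, so the terms may
vanish. -/
lemma summable_of_succ_eq_mul {R : Type*} [SeminormedRing R] [CompleteSpace R] {f g : ℕ → R}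
    {c : R} (hc : ‖c‖ < 1) (hg : Tendsto g atTop (𝓝 c)) (hf : ∀ n, f (n + 1) = g n * f n) :
    Summable f := by
  obtain ⟨r, hcr, hr⟩ := exists_between hc
  refine summable_of_ratio_norm_eventually_le hr ?_
  filter_upwards [hg.norm.eventually_le_const hcr] with n hn
  rw [hf]
  exact (norm_mul_le _ _).trans (mul_le_mul_of_nonneg_right hn (norm_nonneg _))

lemma qPoch_succ (a q : ℂ) (n : ℕ) :
    qPoch a q (n + 1) = qPoch a q n * (1 - a * q ^ n) :=
  Finset.prod_range_succ _ _

lemma qPoch_neg_ne_zero {a q : ℂ} (ha : ‖a‖ < 1) (hq : ‖q‖ ≤ 1) (n : ℕ) :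
    qPoch (-a) q n ≠ 0 := by
  refine Finset.prod_ne_zero_iff.mpr fun j _ => ?_
  rw [neg_mul, sub_neg_eq_add]
  refine one_add_ne_zero_of_norm_lt_one ?_
  rw [norm_mul, norm_pow]
  exact (mul_le_of_le_one_right (norm_nonneg a) (pow_le_one₀ (norm_nonneg q) hq)).trans_lt ha

noncomputable def qTerm (q : ℂ) (n : ℕ) : ℂ :=
  qPoch (1 / q) (q ^ 2) n * (-1 : ℂ) ^ n * q ^ n / qPoch (-q ^ 2) (q ^ 2) n

section qTerm

variable {q : ℂ}

lemma norm_sq_lt_one (hq : ‖q‖ < 1) : ‖q ^ 2‖ < 1 := by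
  rw [norm_pow]
  exact pow_lt_one₀ (norm_nonneg q) hq two_ne_zero

lemma qTerm_succ_mul (hq0 : q ≠ 0) (hq : ‖q‖ < 1) (n : ℕ) :
    qTerm q (n + 1) * (1 + (q ^ 2) ^ (n + 1)) = -(q - (q ^ 2) ^ n) * qTerm q n := by
  have hsq := norm_sq_lt_one hq
  have hden := qPoch_neg_ne_zero hsq hsq.le (n + 1)
  have hfactor : (1 : ℂ) - -q ^ 2 * (q ^ 2) ^ n = 1 + (q ^ 2) ^ (n + 1) := by ring
  rw [qPoch_succ, hfactor] at hden
  obtain ⟨hden, hlast⟩ := mul_ne_zero_iff.mp hden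
  unfold qTerm
  rw [qPoch_succ, qPoch_succ, hfactor]
  field_simp
  ring

lemma qTerm_summable (hq0 : q ≠ 0) (hq : ‖q‖ < 1) : Summable (qTerm q) := by
  have hpow := tendsto_pow_atTop_nhds_zero_of_norm_lt_one (norm_sq_lt_one hq)
  have hratio : Tendsto (fun n => -(q - (q ^ 2) ^ n) / (1 + (q ^ 2) ^ (n + 1))) atTop
      (𝓝 (-(q - 0) / (1 + 0))) :=
    ((tendsto_const_nhds.sub hpow).neg).div
      (tendsto_const_nhds.add ((tendsto_add_atTop_iff_nat 1).mpr hpow)) (by simp)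
  rw [sub_zero, add_zero, div_one] at hratio
  refine summable_of_succ_eq_mul (by rwa [norm_neg]) hratio fun n => ?_
  have hlast : 1 + (q ^ 2) ^ (n + 1) ≠ 0 := one_add_ne_zero_of_norm_lt_one <| by
    rw [norm_pow]
    exact pow_lt_one₀ (norm_nonneg _) (norm_sq_lt_one hq) n.succ_ne_zero
  rw [div_mul_eq_mul_div, eq_div_iff hlast, qTerm_succ_mul hq0 hq]

lemma sum_range_qTerm (hq0 : q ≠ 0) (hq : ‖q‖ < 1) (N : ℕ) :
    ∑ n ∈ Finset.range N, qTerm q n = (2 - qTerm q N * (1 + (q ^ 2) ^ N)) / (1 + q) := by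
  have hstep (n : ℕ) : (1 + q) * qTerm q n =
      qTerm q n * (1 + (q ^ 2) ^ n) - qTerm q (n + 1) * (1 + (q ^ 2) ^ (n + 1)) := by
    rw [qTerm_succ_mul hq0 hq]
    ring
  rw [eq_div_iff (one_add_ne_zero_of_norm_lt_one hq), mul_comm, Finset.mul_sum,
    Finset.sum_congr rfl fun n _ => hstep n, Finset.sum_range_sub']
  norm_num [qTerm, qPoch]

end qTerm

theorem stmt_12_general (q : ℂ) (hq0 : q ≠ 0) (hq : ‖q‖ < 1) :
    ∑' n : ℕ, qPoch (1 / q) (q ^ 2) n * (-1 : ℂ) ^ n * q ^ n / qPoch (-q ^ 2) (q ^ 2) n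
      = 2 / (1 + q) := by
  have hs := qTerm_summable hq0 hq
  have hF : Tendsto (fun N => qTerm q N * (1 + (q ^ 2) ^ N)) atTop (𝓝 0) := by
    simpa using hs.tendsto_atTop_zero.mul
      (tendsto_const_nhds.add (tendsto_pow_atTop_nhds_zero_of_norm_lt_one (norm_sq_lt_one hq)))
  refine (hs.hasSum_iff_tendsto_nat.mpr ?_).tsum_eq
  simp_rw [sum_range_qTerm hq0 hq]
  simpa using (tendsto_const_nhds.sub hF).div_const (1 + q)

/-- For 0<|q|<1 with q≠-1, `∑_{n≥0} (1/q;q²)_n (-1)^n q^n/(-q²;q²)_n = 2/(1+q)`. -/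
theorem stmt_12 (q : ℂ) (hq0 : q ≠ 0) (hq : ‖q‖ < 1) (hqm1 : q ≠ -1) :
    ∑' n : ℕ, qPoch (1 / q) (q ^ 2) n * (-1 : ℂ) ^ n * q ^ n / qPoch (-q ^ 2) (q ^ 2) n
      = 2 / (1 + q) :=
  stmt_12_general q hq0 hq
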